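/- Let C = (C_{jabc}) be a smooth coefficient field on ℝᵐ with values in ℝ^{l×m×m×k} satisfying the symmetry C_{jabc} = C_{jbac}, defining the second-order divergence-form operator (P_C u)_j = Σ_{a,b,c} ∂_a(C_{jabc} ∂_b u_c) on vector fields u : ℝᵐ → ℝᵏ. Then for any smooth positive f : ℝᵐ → ℝ and smooth u : ℝᵐ → ℝᵏ, (P_{f²C}(f⁻¹u))_j = f (P_C u)_j − Σ_c u_c (P_C f)_{jc}, where (P_C f)_{jc} = Σ_{a,b} ∂_a(C_{jabc} ∂_b f). -/

import Mathlib

/-- Partial derivative in the `a`-th coordinate. -/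
noncomputable def pd (m : ℕ) (a : Fin m) (v : (Fin m → ℝ) → ℝ) (x : Fin m → ℝ) : ℝ :=
  deriv (fun y => v (Function.update x a y)) (x a)

/-- `(P_C u)_j = ∑_{a,b,c} ∂_a (C_{jabc} ∂_b u_c)` acting on vector fields `u : ℝᵐ → ℝᵏ`. -/
noncomputable def PopVec (m l k : ℕ)
    (C : Fin l → Fin m → Fin m → Fin k → (Fin m → ℝ) → ℝ)
    (u : (Fin m → ℝ) → Fin k → ℝ) (j : Fin l) (x : Fin m → ℝ) : ℝ :=
  ∑ a, ∑ b, ∑ c, pd m a (fun y => C j a b c y * pd m b (fun y' => u y' c) y) x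

/-- `(P_C f)_{jc} = ∑_{a,b} ∂_a (C_{jabc} ∂_b f)` acting on scalar functions. -/
noncomputable def PopScal (m l k : ℕ)
    (C : Fin l → Fin m → Fin m → Fin k → (Fin m → ℝ) → ℝ)
    (f : (Fin m → ℝ) → ℝ) (j : Fin l) (c : Fin k) (x : Fin m → ℝ) : ℝ :=
  ∑ a, ∑ b, pd m a (fun y => C j a b c y * pd m b f y) x

theorem pd_hasDerivAt {m : ℕ} (a : Fin m) (v : (Fin m → ℝ) → ℝ) (x : Fin m → ℝ)
    (hv : DifferentiableAt ℝ v x) :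
    HasDerivAt (fun y => v (Function.update x a y)) (pd m a v x) (x a) := by
  have h0 : Function.update x a (x a) = x := Function.update_eq_self a x
  have hv' : DifferentiableAt ℝ v (Function.update x a (x a)) := by rw [h0]; exact hv
  have h := hv'.hasFDerivAt.comp_hasDerivAt (x a) (hasDerivAt_update x a (x a))
  have e : pd m a v x = fderiv ℝ v (Function.update x a (x a)) (Pi.single a 1) := h.deriv
  rw [e]; exact h

theorem pd_eq_fderiv {m : ℕ} (a : Fin m) (v : (Fin m → ℝ) → ℝ) (x : Fin m → ℝ)
    (hv : DifferentiableAt ℝ v x) :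
    pd m a v x = fderiv ℝ v x (Pi.single a 1) := by
  have h0 : Function.update x a (x a) = x := Function.update_eq_self a x
  have hv' : DifferentiableAt ℝ v (Function.update x a (x a)) := by rw [h0]; exact hv
  have h := hv'.hasFDerivAt.comp_hasDerivAt (x a) (hasDerivAt_update x a (x a))
  have e : pd m a v x = fderiv ℝ v (Function.update x a (x a)) (Pi.single a 1) := h.deriv
  rw [e, h0]

theorem pd_contDiff {m : ℕ} (a : Fin m) (v : (Fin m → ℝ) → ℝ) (hv : ContDiff ℝ (⊤ : ℕ∞) v) :
    ContDiff ℝ (⊤ : ℕ∞) (pd m a v) := by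
  have e : pd m a v = fun x => fderiv ℝ v x (Pi.single a 1) :=
    funext fun x => pd_eq_fderiv a v x (hv.differentiable (by simp) x)
  rw [e]
  exact (hv.fderiv_right (le_of_eq rfl)).clm_apply contDiff_const

theorem pd_mul {m : ℕ} (a : Fin m) (g h : (Fin m → ℝ) → ℝ) (x : Fin m → ℝ)
    (hg : DifferentiableAt ℝ g x) (hh : DifferentiableAt ℝ h x) :
    pd m a (fun y => g y * h y) x = pd m a g x * h x + g x * pd m a h x := by
  have H := ((pd_hasDerivAt a g x hg).mul (pd_hasDerivAt a h x hh)).deriv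
  simpa [pd, Function.update_eq_self, Pi.mul_def] using H

theorem pd_sub {m : ℕ} (a : Fin m) (g h : (Fin m → ℝ) → ℝ) (x : Fin m → ℝ)
    (hg : DifferentiableAt ℝ g x) (hh : DifferentiableAt ℝ h x) :
    pd m a (fun y => g y - h y) x = pd m a g x - pd m a h x := by
  have H := ((pd_hasDerivAt a g x hg).sub (pd_hasDerivAt a h x hh)).deriv
  simpa [pd, Function.update_eq_self, Pi.sub_def] using H

theorem pd_inv_mul {m : ℕ} (b : Fin m) (f u : (Fin m → ℝ) → ℝ) (y : Fin m → ℝ)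
    (hf : DifferentiableAt ℝ f y) (hu : DifferentiableAt ℝ u y) (h0 : f y ≠ 0) :
    pd m b (fun y' => (f y')⁻¹ * u y') y
      = (f y)⁻¹ * pd m b u y - ((f y)^2)⁻¹ * pd m b f y * u y := by
  have Hf := pd_hasDerivAt b f y hf
  have h0' : f (Function.update y b (y b)) ≠ 0 := by
    rwa [Function.update_eq_self]
  have Hinv := Hf.inv h0'
  have H := (Hinv.mul (pd_hasDerivAt b u y hu)).deriv
  simp only [pd, Function.update_eq_self, Pi.mul_def, Pi.inv_def] at H ⊢
  rw [H]
  field_simp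
  ring

/-- Hidden conformal invariance for general divergence-form operators on vector fields:
`(P_{f²C}(f⁻¹u))_j = f (P_C u)_j − ∑_c u_c (P_C f)_{jc}`. -/
theorem stmt2 (m l k : ℕ) (hm : 1 ≤ m) (hl : 1 ≤ l) (hk : 1 ≤ k)
    (C : Fin l → Fin m → Fin m → Fin k → (Fin m → ℝ) → ℝ)
    (hCsmooth : ∀ j a b c, ContDiff ℝ (⊤ : ℕ∞) (C j a b c))
    (hCsymm : ∀ j a b c, C j a b c = C j b a c)
    (f : (Fin m → ℝ) → ℝ) (u : (Fin m → ℝ) → Fin k → ℝ)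
    (hf : ContDiff ℝ (⊤ : ℕ∞) f) (hfpos : ∀ x, 0 < f x)
    (hu : ∀ c, ContDiff ℝ (⊤ : ℕ∞) (fun y => u y c)) :
    ∀ j x,
      PopVec m l k (fun j a b c y => (f y)^2 * C j a b c y)
        (fun y c => (f y)⁻¹ * u y c) j x
      = f x * PopVec m l k C u j x - ∑ c, u x c * PopScal m l k C f j c x := by
  intro j x
  have hfd : ∀ y, DifferentiableAt ℝ f y := fun y => (hf.differentiable (by simp)) y
  have hud : ∀ c y, DifferentiableAt ℝ (fun y' => u y' c) y :=
    fun c y => ((hu c).differentiable (by simp)) y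
  have hCd : ∀ j a b c y, DifferentiableAt ℝ (C j a b c) y :=
    fun j a b c y => ((hCsmooth j a b c).differentiable (by simp)) y
  have hpdf : ∀ b y, DifferentiableAt ℝ (pd m b f) y :=
    fun b y => ((pd_contDiff b f hf).differentiable (by simp)) y
  have hpdu : ∀ b c y, DifferentiableAt ℝ (pd m b (fun y' => u y' c)) y :=
    fun b c y => ((pd_contDiff b _ (hu c)).differentiable (by simp)) y
  -- Step 1: rewrite each inner function
  have key : ∀ (a b : Fin m) (c : Fin k),
      pd m a (fun y => (f y)^2 * C j a b c y * pd m b (fun y' => (f y')⁻¹ * u y' c) y) x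
      = (f x * pd m a (fun y => C j a b c y * pd m b (fun y' => u y' c) y) x
          - u x c * pd m a (fun y => C j a b c y * pd m b f y) x)
        + (pd m a f x * (C j a b c x * pd m b (fun y' => u y' c) x)
          - C j a b c x * pd m b f x * pd m a (fun y' => u y' c) x) := by
    intro a b c
    have e1 : (fun y => (f y)^2 * C j a b c y * pd m b (fun y' => (f y')⁻¹ * u y' c) y)
        = fun y => f y * (C j a b c y * pd m b (fun y' => u y' c) y)
            - (C j a b c y * pd m b f y) * u y c := by
      funext y
      rw [pd_inv_mul b f (fun y' => u y' c) y (hfd y) (hud c y) (hfpos y).ne']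
      have h0 : f y ≠ 0 := (hfpos y).ne'
      field_simp
    rw [e1]
    rw [pd_sub a (fun y => f y * (C j a b c y * pd m b (fun y' => u y' c) y)) (fun y => C j a b c y * pd m b f y * u y c) x
      ((hfd x).mul ((hCd j a b c x).mul (hpdu b c x)))
      (((hCd j a b c x).mul (hpdf b x)).mul (hud c x))]
    rw [pd_mul a f (fun y => C j a b c y * pd m b (fun y' => u y' c) y) x (hfd x) ((hCd j a b c x).mul (hpdu b c x))]
    rw [pd_mul a (fun y => C j a b c y * pd m b f y) (fun y' => u y' c) x ((hCd j a b c x).mul (hpdf b x)) (hud c x)]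
    ring
  -- Step 2: sum everything
  unfold PopVec PopScal
  simp only [key]
  rw [Finset.sum_congr rfl (fun a _ => Finset.sum_congr rfl
    (fun b _ => Finset.sum_add_distrib)),
    Finset.sum_congr rfl (fun a _ => Finset.sum_add_distrib), Finset.sum_add_distrib]
  have E0 : (∑ a, ∑ b, ∑ c, (pd m a f x * (C j a b c x * pd m b (fun y' => u y' c) x)
      - C j a b c x * pd m b f x * pd m a (fun y' => u y' c) x)) = 0 := by
    simp only [Finset.sum_sub_distrib]
    rw [sub_eq_zero]
    rw [Finset.sum_comm]
    refine Finset.sum_congr rfl fun a _ => Finset.sum_congr rfl fun b _ =>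
      Finset.sum_congr rfl fun c _ => ?_
    rw [hCsymm j b a c]
    ring
  rw [E0, add_zero]
  simp only [Finset.sum_sub_distrib, Finset.mul_sum]
  congr 1
  rw [Finset.sum_congr rfl fun a (_ : a ∈ Finset.univ) => (Finset.sum_comm : (∑ b, ∑ c, u x c * pd m a (fun y => C j a b c y * pd m b f y) x) = _)]
  rw [Finset.sum_comm]
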